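/- arXiv:2002.04725 — 4 statements merged into one kernel-verified Lean document; each statement's English description precedes it below -/
import Mathlib

section
/- There exists a universal constant K0 > 0 such that for every δ ∈ (0, 1) there exists a point x0 with √(max{3/2, 2 log(1/(1−δ))}) < x0 < √(K0 + 2 log(1/(1−δ))) such that the function x ↦ φ(x; δ) is strictly increasing on (0, x0) and strictly decreasing on (x0, ∞). -/
open Real MeasureTheory ProbabilityTheory Filter Topology

/-- The CDF of the standard normal distribution. -/
noncomputable def stdNormalCDF (x : ℝ) : ℝ := cdf (gaussianReal 0 1) x

/-- `phi δ x = 2Φ(x) − Φ(x(1+δ)) − Φ(x(1−δ))`. -/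
noncomputable def phi (δ x : ℝ) : ℝ :=
  2 * stdNormalCDF x - stdNormalCDF (x * (1 + δ)) - stdNormalCDF (x * (1 - δ))

/-!
Writing `p` for the standard normal density, `∂ₓ φ(x; δ) = p(x) h(x²)` with
`h(t) = 2 - (1 + δ) exp (-δ (2 + δ) t / 2) - (1 - δ) exp (δ (2 - δ) t / 2)`.
The function `h` is strictly concave with `h 0 = 0`, so it is positive before its unique positive
root `t₀` and negative after it, and `φ(·; δ)` increases on `(0, √t₀)` and decreases afterwards.
Elementary bounds on the exponentials give `h > 0` at `max (3/2) (2 log (1/(1-δ)))` and `h < 0` at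
`24 + 2 log (1/(1-δ))`, which locates `t₀` with `K0 = 24`.
-/

theorem hasDerivAt_integral_Iic {f : ℝ → ℝ} (hf : Integrable f) {x : ℝ} (hx : ContinuousAt f x) :
    HasDerivAt (fun u => ∫ t in Set.Iic u, f t) (f x) x := by
  have hsplit : (fun u => ∫ t in Set.Iic u, f t) =
      fun u => (∫ t in Set.Iic 0, f t) + ∫ t in (0)..u, f t := by
    funext u
    rw [← intervalIntegral.integral_Iic_sub_Iic hf.integrableOn hf.integrableOn]
    ring
  rw [hsplit]
  exact (intervalIntegral.integral_hasDerivAt_right hf.intervalIntegrable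
    hf.aestronglyMeasurable.stronglyMeasurableAtFilter hx).const_add _

theorem StrictConcaveOn.pos_of_eq_zero_of_lt {f : ℝ → ℝ} (hf : StrictConcaveOn ℝ (Set.Ici 0) f)
    (h0 : f 0 = 0) {t₀ t : ℝ} (ht₀ : f t₀ = 0) (ht : 0 < t) (htt₀ : t < t₀) : 0 < f t := by
  have hslope := hf.slope_anti_adjacent Set.self_mem_Ici (ht.trans htt₀).le ht htt₀
  rw [h0, ht₀, sub_zero, sub_zero, zero_sub] at hslope
  by_contra! hft
  have : 0 ≤ -f t / (t₀ - t) := div_nonneg (neg_nonneg.2 hft) (sub_pos.2 htt₀).le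
  linarith [div_nonpos_of_nonpos_of_nonneg hft ht.le]

theorem StrictConcaveOn.neg_of_eq_zero_of_lt {f : ℝ → ℝ} (hf : StrictConcaveOn ℝ (Set.Ici 0) f)
    (h0 : f 0 = 0) {t₀ t : ℝ} (ht₀ : f t₀ = 0) (ht₀pos : 0 < t₀) (ht₀t : t₀ < t) : f t < 0 := by
  have hslope := hf.slope_anti_adjacent Set.self_mem_Ici (ht₀pos.trans ht₀t).le ht₀pos ht₀t
  rw [h0, ht₀, sub_zero, sub_zero, zero_div, div_lt_iff₀ (sub_pos.2 ht₀t), zero_mul] at hslope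
  exact hslope

theorem StrictConcaveOn.exists_sign_change {f : ℝ → ℝ} (hf : StrictConcaveOn ℝ (Set.Ici 0) f)
    (h0 : f 0 = 0) {a b : ℝ} (hfc : ContinuousOn f (Set.Icc a b)) (ha : 0 < a) (hab : a ≤ b)
    (hfa : 0 < f a) (hfb : f b < 0) :
    ∃ t₀ ∈ Set.Ioo a b, (∀ t ∈ Set.Ioo 0 t₀, 0 < f t) ∧ ∀ t ∈ Set.Ioi t₀, f t < 0 := by
  obtain ⟨t₀, ⟨hat₀, ht₀b⟩, ht₀⟩ := intermediate_value_Icc' hab hfc ⟨hfb.le, hfa.le⟩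
  refine ⟨t₀, ⟨hat₀.lt_of_ne ?_, ht₀b.lt_of_ne ?_⟩, fun t ht => ?_, fun t ht => ?_⟩
  · rintro rfl; exact hfa.ne' ht₀
  · rintro rfl; exact hfb.ne ht₀
  · exact hf.pos_of_eq_zero_of_lt h0 ht₀ ht.1 ht.2
  · exact hf.neg_of_eq_zero_of_lt h0 ht₀ (ha.trans_le hat₀) ht

theorem one_sub_mul_exp_two_mul_lt {x : ℝ} (hx₀ : 0 < x) (hx₁ : x < 1) :
    (1 - x) * exp (2 * x) < 1 + x := by
  have hseries := hasSum_log_sub_log_of_abs_lt_one (abs_lt.2 ⟨by linarith, hx₁⟩)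
  have hfirst := sum_le_hasSum (Finset.range 2) (fun k _ => by positivity) hseries
  simp only [Finset.sum_range_succ, Finset.sum_range_zero] at hfirst
  norm_num at hfirst
  have hlog : 2 * x < log (1 + x) - log (1 - x) := by nlinarith [pow_pos hx₀ 3]
  have := exp_lt_exp.2 hlog
  rw [exp_sub, exp_log (by linarith), exp_log (by linarith), lt_div_iff₀ (by linarith)] at this
  linarith

theorem one_sub_mul_two_sub_mul_exp_lt {δ : ℝ} (hδ₀ : 0 < δ) (hδ₁ : δ < 1) :
    (1 - δ) * (2 - δ) * exp (3 * δ) < (1 + δ) * (2 + δ) := by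
  have h₁ := one_sub_mul_exp_two_mul_lt hδ₀ hδ₁
  have h₂ := one_sub_mul_exp_two_mul_lt (half_pos hδ₀) (by linarith)
  have hsplit : (1 - δ) * (2 - δ) * exp (3 * δ)
      = ((1 - δ) * exp (2 * δ)) * (2 * ((1 - δ / 2) * exp (2 * (δ / 2)))) := by
    rw [show 3 * δ = 2 * δ + 2 * (δ / 2) by ring, exp_add]
    ring
  rw [hsplit, show (1 + δ) * (2 + δ) = (1 + δ) * (2 * (1 + δ / 2)) by ring]
  have : 0 < (1 - δ / 2) * exp (2 * (δ / 2)) := mul_pos (by linarith) (exp_pos _)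
  gcongr

theorem stdNormalCDF_eq_integral (x : ℝ) :
    stdNormalCDF x = ∫ t in Set.Iic x, gaussianPDFReal 0 1 t := by
  rw [stdNormalCDF, cdf_eq_real, measureReal_def, gaussianReal_apply_eq_integral 0 one_ne_zero,
    ENNReal.toReal_ofReal]
  exact setIntegral_nonneg measurableSet_Iic fun t _ => gaussianPDFReal_nonneg 0 1 t

theorem hasDerivAt_stdNormalCDF (x : ℝ) :
    HasDerivAt stdNormalCDF (gaussianPDFReal 0 1 x) x := by
  rw [funext stdNormalCDF_eq_integral]
  exact hasDerivAt_integral_Iic (integrable_gaussianPDFReal 0 1)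
    (by unfold gaussianPDFReal; fun_prop)

/-- `phi δ` has derivative `p x * phiDerivRatio δ (x ^ 2)`, `p` the standard normal density. -/
noncomputable def phiDerivRatio (δ t : ℝ) : ℝ :=
  2 - (1 + δ) * exp (-(δ * (2 + δ) / 2 * t)) - (1 - δ) * exp (δ * (2 - δ) / 2 * t)

theorem hasDerivAt_phi (δ x : ℝ) :
    HasDerivAt (phi δ) (gaussianPDFReal 0 1 x * phiDerivRatio δ (x ^ 2)) x := by
  have hscale (c : ℝ) : HasDerivAt (fun y => stdNormalCDF (y * c))
      (c * (gaussianPDFReal 0 1 x * exp (-((c ^ 2 - 1) / 2 * x ^ 2)))) x := by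
    refine ((hasDerivAt_stdNormalCDF (x * c)).comp x (hasDerivAt_mul_const c)).congr_deriv ?_
    simp only [gaussianPDFReal_def, NNReal.coe_one, mul_one, sub_zero, mul_assoc, ← exp_add]
    ring_nf
  refine ((((hasDerivAt_stdNormalCDF x).const_mul 2).sub (hscale (1 + δ))).sub
    (hscale (1 - δ))).congr_deriv ?_
  rw [phiDerivRatio]
  ring_nf

theorem phiDerivRatio_zero (δ : ℝ) : phiDerivRatio δ 0 = 0 := by
  simp only [phiDerivRatio, mul_zero, neg_zero, exp_zero]
  ring

theorem continuous_phiDerivRatio (δ : ℝ) : Continuous (phiDerivRatio δ) := by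
  unfold phiDerivRatio
  fun_prop

theorem hasDerivAt_phiDerivRatio (δ t : ℝ) :
    HasDerivAt (phiDerivRatio δ) ((1 + δ) * (δ * (2 + δ) / 2) * exp (-(δ * (2 + δ) / 2 * t))
      - (1 - δ) * (δ * (2 - δ) / 2) * exp (δ * (2 - δ) / 2 * t)) t := by
  have hexp (c : ℝ) : HasDerivAt (fun t => exp (c * t)) (exp (c * t) * c) t :=
    ((hasDerivAt_id t).const_mul c).exp.congr_deriv (by simp)
  have := ((((hexp (-(δ * (2 + δ) / 2))).const_mul (1 + δ)).const_sub 2).sub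
    ((hexp (δ * (2 - δ) / 2)).const_mul (1 - δ)))
  simp only [neg_mul] at this
  exact this.congr_deriv (by ring)

theorem strictConcaveOn_phiDerivRatio {δ : ℝ} (hδ₀ : 0 < δ) (hδ₁ : δ < 1) :
    StrictConcaveOn ℝ Set.univ (phiDerivRatio δ) := by
  refine StrictAntiOn.strictConcaveOn_of_deriv convex_univ
    (continuous_phiDerivRatio δ).continuousOn ?_
  rw [funext fun t => (hasDerivAt_phiDerivRatio δ t).deriv]
  intro s _ t _ hst
  have ha : 0 < (1 + δ) * (δ * (2 + δ) / 2) := by positivity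
  have hb : 0 < (1 - δ) * (δ * (2 - δ) / 2) := mul_pos (by linarith) (by nlinarith)
  have h₁ : exp (-(δ * (2 + δ) / 2 * t)) < exp (-(δ * (2 + δ) / 2 * s)) :=
    exp_lt_exp.2 (neg_lt_neg (by gcongr))
  have h₂ : exp (δ * (2 - δ) / 2 * s) < exp (δ * (2 - δ) / 2 * t) :=
    exp_lt_exp.2 (mul_lt_mul_of_pos_left hst (by nlinarith))
  nlinarith [mul_lt_mul_of_pos_left h₁ ha, mul_lt_mul_of_pos_left h₂ hb]

theorem phiDerivRatio_three_halves_pos {δ : ℝ} (hδ₀ : 0 < δ) (hδ₁ : δ < 1) :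
    0 < phiDerivRatio δ (3 / 2) := by
  have hmono : StrictMonoOn (phiDerivRatio δ) (Set.Icc 0 (3 / 2)) := by
    refine strictMonoOn_of_deriv_pos (convex_Icc _ _) (continuous_phiDerivRatio δ).continuousOn ?_
    intro t ht
    rw [interior_Icc] at ht
    rw [(hasDerivAt_phiDerivRatio δ t).deriv, sub_pos]
    -- the two exponents differ by `2 δ t ≤ 3 δ`
    have hexp : exp (δ * (2 - δ) / 2 * t) = exp (-(δ * (2 + δ) / 2 * t)) * exp (2 * δ * t) := by
      rw [← exp_add]; ring_nf
    have hkey : (1 - δ) * (2 - δ) * exp (2 * δ * t) < (1 + δ) * (2 + δ) := by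
      refine lt_of_le_of_lt ?_ (one_sub_mul_two_sub_mul_exp_lt hδ₀ hδ₁)
      exact mul_le_mul_of_nonneg_left (exp_le_exp.2 (by nlinarith [ht.2]))
        (mul_nonneg (by linarith) (by linarith))
    rw [hexp]
    have hE := exp_pos (-(δ * (2 + δ) / 2 * t))
    nlinarith [mul_lt_mul_of_pos_left hkey (mul_pos hE (half_pos hδ₀))]
  simpa [phiDerivRatio_zero] using hmono ⟨le_rfl, by norm_num⟩ ⟨by norm_num, le_rfl⟩ (by norm_num)

theorem phiDerivRatio_two_mul_log_pos {δ : ℝ} (hδ₀ : 0 < δ) (hδ₁ : δ < 1)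
    (hδ : 1 ≤ δ * (2 + δ)) : 0 < phiDerivRatio δ (2 * log (1 / (1 - δ))) := by
  have hs : 0 < 1 - δ := by linarith
  have hlog : log (1 - δ) < 0 := log_neg hs (by linarith)
  have h₁ : (1 + δ) * exp (-(δ * (2 + δ) / 2 * (2 * log (1 / (1 - δ))))) < 1 := by
    rw [one_div, log_inv]
    calc (1 + δ) * exp (-(δ * (2 + δ) / 2 * (2 * -log (1 - δ))))
        ≤ (1 + δ) * exp (log (1 - δ)) := by gcongr; nlinarith
      _ = 1 - δ ^ 2 := by rw [exp_log hs]; ring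
      _ < 1 := by nlinarith
  have h₂ : (1 - δ) * exp (δ * (2 - δ) / 2 * (2 * log (1 / (1 - δ)))) < 1 := by
    rw [one_div, log_inv]
    calc (1 - δ) * exp (δ * (2 - δ) / 2 * (2 * -log (1 - δ)))
        = exp ((1 - δ) ^ 2 * log (1 - δ)) := by
          nth_rewrite 1 [← exp_log hs]
          rw [← exp_add]; ring_nf
      _ < 1 := exp_lt_one_iff.2 (mul_neg_of_pos_of_neg (by positivity) hlog)
  unfold phiDerivRatio
  linarith

theorem phiDerivRatio_max_pos {δ : ℝ} (hδ₀ : 0 < δ) (hδ₁ : δ < 1) :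
    0 < phiDerivRatio δ (max (3 / 2) (2 * log (1 / (1 - δ)))) := by
  rcases le_total (2 * log (1 / (1 - δ))) (3 / 2) with hL | hL
  · rw [max_eq_left hL]
    exact phiDerivRatio_three_halves_pos hδ₀ hδ₁
  · rw [max_eq_right hL]
    refine phiDerivRatio_two_mul_log_pos hδ₀ hδ₁ ?_
    have hs : 0 < 1 - δ := by linarith
    have h74 : 7 / 4 ≤ 1 / (1 - δ) := by
      calc (7 / 4 : ℝ) ≤ exp (3 / 4) := by linarith [add_one_le_exp (3 / 4 : ℝ)]
        _ ≤ exp (log (1 / (1 - δ))) := exp_le_exp.2 (by linarith)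
        _ = 1 / (1 - δ) := exp_log (by positivity)
    rw [le_div_iff₀ hs] at h74
    -- `δ ≥ 3 / 7`, hence `δ (2 + δ) ≥ 51 / 49`
    nlinarith

theorem phiDerivRatio_neg_of_lt_mul {δ T : ℝ} (hδ₀ : 0 < δ) (hδ₁ : δ < 1) (hT : 0 < T)
    (h : 24 < (1 - δ) * (2 - δ) ^ 2 * T) : phiDerivRatio δ T < 0 := by
  have h₁ : 1 - δ * (2 + δ) / 2 * T ≤ exp (-(δ * (2 + δ) / 2 * T)) := by
    linarith [add_one_le_exp (-(δ * (2 + δ) / 2 * T))]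
  have h₂ := quadratic_le_exp_of_nonneg (x := δ * (2 - δ) / 2 * T) (by
    have : 0 < 2 - δ := by linarith
    positivity)
  have hbound : phiDerivRatio δ T ≤ δ ^ 2 * T * (24 - (1 - δ) * (2 - δ) ^ 2 * T) / 8 := by
    unfold phiDerivRatio
    nlinarith [mul_le_mul_of_nonneg_left h₁ (by linarith : (0 : ℝ) ≤ 1 + δ),
      mul_le_mul_of_nonneg_left h₂ (by linarith : (0 : ℝ) ≤ 1 - δ)]
  have : δ ^ 2 * T * (24 - (1 - δ) * (2 - δ) ^ 2 * T) < 0 :=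
    mul_neg_of_pos_of_neg (by positivity) (by linarith)
  linarith

theorem phiDerivRatio_neg_of_two_le {δ T : ℝ} (hδ : -1 < δ)
    (h : 2 ≤ (1 - δ) * exp (δ * (2 - δ) / 2 * T)) : phiDerivRatio δ T < 0 := by
  have : 0 < (1 + δ) * exp (-(δ * (2 + δ) / 2 * T)) := mul_pos (by linarith) (exp_pos _)
  unfold phiDerivRatio
  linarith

theorem phiDerivRatio_add_two_mul_log_neg {δ : ℝ} (hδ₀ : 0 < δ) (hδ₁ : δ < 1) :
    phiDerivRatio δ (24 + 2 * log (1 / (1 - δ))) < 0 := by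
  have hs : 0 < 1 - δ := by linarith
  have hL : 0 ≤ log (1 / (1 - δ)) := log_nonneg (by rw [le_div_iff₀ hs]; linarith)
  rcases le_or_gt δ (1 / 2) with hδ | hδ
  · refine phiDerivRatio_neg_of_lt_mul hδ₀ hδ₁ (by positivity) ?_
    have : 9 / 8 ≤ (1 - δ) * (2 - δ) ^ 2 := by nlinarith [sq_nonneg (δ - 9 / 4)]
    nlinarith
  · refine phiDerivRatio_neg_of_two_le (by linarith) ?_
    have hexp : (1 - δ) * exp (δ * (2 - δ) / 2 * (24 + 2 * log (1 / (1 - δ))))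
        = exp (12 * δ * (2 - δ) + (1 - δ) ^ 2 * log (1 - δ)) := by
      rw [one_div, log_inv]
      nth_rewrite 1 [← exp_log hs]
      rw [← exp_add]; ring_nf
    have hlog : (1 - δ) ^ 2 * (1 - (1 - δ)⁻¹) ≤ (1 - δ) ^ 2 * log (1 - δ) :=
      mul_le_mul_of_nonneg_left (one_sub_inv_le_log_of_pos hs) (sq_nonneg _)
    have hsimp : (1 - δ) ^ 2 * (1 - (1 - δ)⁻¹) = (1 - δ) ^ 2 - (1 - δ) := by
      field_simp
    rw [hexp]
    have := add_one_le_exp (12 * δ * (2 - δ) + (1 - δ) ^ 2 * log (1 - δ))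
    nlinarith

theorem strictMonoOn_phi {δ t₀ : ℝ} (h : ∀ t ∈ Set.Ioo 0 t₀, 0 < phiDerivRatio δ t) :
    StrictMonoOn (phi δ) (Set.Ioo 0 √t₀) := by
  refine strictMonoOn_of_deriv_pos (convex_Ioo _ _)
    (fun x _ => (hasDerivAt_phi δ x).continuousAt.continuousWithinAt) fun x hx => ?_
  rw [interior_Ioo] at hx
  rw [(hasDerivAt_phi δ x).deriv]
  exact mul_pos (gaussianPDFReal_pos 0 1 x one_ne_zero)
    (h _ ⟨pow_pos hx.1 2, (lt_sqrt hx.1.le).1 hx.2⟩)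

theorem strictAntiOn_phi {δ t₀ : ℝ} (ht₀ : 0 < t₀) (h : ∀ t ∈ Set.Ioi t₀, phiDerivRatio δ t < 0) :
    StrictAntiOn (phi δ) (Set.Ioi √t₀) := by
  refine strictAntiOn_of_deriv_neg (convex_Ioi _)
    (fun x _ => (hasDerivAt_phi δ x).continuousAt.continuousWithinAt) fun x hx => ?_
  rw [interior_Ioi] at hx
  rw [(hasDerivAt_phi δ x).deriv]
  exact mul_neg_of_pos_of_neg (gaussianPDFReal_pos 0 1 x one_ne_zero)
    (h _ ((sqrt_lt' ((sqrt_pos.2 ht₀).trans hx)).1 hx))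

theorem phi_unimodal :
    ∃ K0 : ℝ, 0 < K0 ∧ ∀ δ : ℝ, δ ∈ Set.Ioo (0 : ℝ) 1 →
      ∃ x0 : ℝ,
        Real.sqrt (max (3/2) (2 * Real.log (1/(1-δ)))) < x0 ∧
        x0 < Real.sqrt (K0 + 2 * Real.log (1/(1-δ))) ∧
        StrictMonoOn (phi δ) (Set.Ioo 0 x0) ∧
        StrictAntiOn (phi δ) (Set.Ioi x0) := by
  refine ⟨24, by norm_num, fun δ ⟨hδ₀, hδ₁⟩ => ?_⟩
  have hlower : 0 < max (3 / 2) (2 * log (1 / (1 - δ))) := lt_max_of_lt_left (by norm_num)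
  have hL : 0 ≤ log (1 / (1 - δ)) := log_nonneg (one_le_one_div (by linarith) (by linarith))
  have hle : max (3 / 2) (2 * log (1 / (1 - δ))) ≤ 24 + 2 * log (1 / (1 - δ)) :=
    max_le (by linarith) (by linarith)
  obtain ⟨t₀, ⟨hlt₀, ht₀u⟩, hpos, hneg⟩ :=
    ((strictConcaveOn_phiDerivRatio hδ₀ hδ₁).subset (Set.subset_univ _) (convex_Ici 0)
      ).exists_sign_change (phiDerivRatio_zero δ) (continuous_phiDerivRatio δ).continuousOn
      hlower hle (phiDerivRatio_max_pos hδ₀ hδ₁) (phiDerivRatio_add_two_mul_log_neg hδ₀ hδ₁)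
  exact ⟨√t₀, sqrt_lt_sqrt hlower.le hlt₀, sqrt_lt_sqrt (hlower.trans hlt₀).le ht₀u,
    strictMonoOn_phi hpos, strictAntiOn_phi (hlower.trans hlt₀) hneg⟩
end

section
/- Under the Gaussian model setup, for every n ≥ 1, g_n = 2W Σ_{j : μ(j) > 0} μ(j) [2Φ(√n μ(j)/σ(j)) − Φ(√n (μ(j)+ε)/σ(j)) − Φ(√n (μ(j)−ε)/σ(j))], where Φ is the CDF of the standard normal distribution. -/
/-!
By linearity of expectation, `g_n` is a sum over coordinates of one-dimensional Gaussian
expectations. Off the null set `{-ε, 0, ε}`, `sign x - sign (x - ε sign x)` equals `2` on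
`(0, ε)`, `-2` on `(-ε, 0)` and `0` elsewhere, so for `u ~ N(m, s²)` its expectation is
`2 (P(0 < u < ε) - P(-ε < u < 0))`. Standardizing and using `Φ(-x) = 1 - Φ(x)` turns this into
`2 (2Φ(m/s) - Φ((m+ε)/s) - Φ((m-ε)/s))` with `s = σ/√n`; coordinates with `μ(j) = 0` drop out.
-/

open Real MeasureTheory ProbabilityTheory Filter Topology

open Set

@[fun_prop]
lemma Real.measurable_sign : Measurable Real.sign :=
  Measurable.ite measurableSet_Iio measurable_const
    (Measurable.ite measurableSet_Ioi measurable_const measurable_const)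

lemma Real.abs_sign_le_one (x : ℝ) : |Real.sign x| ≤ 1 := by
  rcases Real.sign_apply_eq x with h | h | h <;> simp [h]

noncomputable def signShift (ε x : ℝ) : ℝ := Real.sign x - Real.sign (x - ε * Real.sign x)

lemma measurable_signShift (ε : ℝ) : Measurable (signShift ε) := by
  unfold signShift; fun_prop

lemma abs_signShift_le (ε x : ℝ) : |signShift ε x| ≤ 2 := by
  unfold signShift
  have := abs_sub (Real.sign x) (Real.sign (x - ε * Real.sign x))
  linarith [Real.abs_sign_le_one x, Real.abs_sign_le_one (x - ε * Real.sign x)]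

lemma integrable_signShift {ν : Measure ℝ} [IsFiniteMeasure ν] (ε : ℝ) :
    Integrable (signShift ε) ν :=
  .of_bound (measurable_signShift ε).aestronglyMeasurable 2
    (.of_forall fun x => abs_signShift_le ε x)

lemma signShift_eq_indicator_sub_indicator {ε x : ℝ}
    (hx₁ : x ≠ -ε) (hx₂ : x ≠ 0) (hx₃ : x ≠ ε) :
    signShift ε x = (Ioo 0 ε).indicator 2 x - (Ioo (-ε) 0).indicator 2 x := by
  simp only [signShift, indicator_apply, mem_Ioo, Pi.ofNat_apply]
  rcases hx₂.lt_or_gt with hneg | hpos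
  · rw [Real.sign_of_neg hneg]
    rcases hx₁.lt_or_gt with h | h
    · rw [Real.sign_of_neg (by linarith)]; split_ifs <;> grind
    · rw [Real.sign_of_pos (by linarith)]; split_ifs <;> grind
  · rw [Real.sign_of_pos hpos]
    rcases hx₃.lt_or_gt with h | h
    · rw [Real.sign_of_neg (by linarith)]; split_ifs <;> grind
    · rw [Real.sign_of_pos (by linarith)]; split_ifs <;> grind

lemma integral_signShift {ν : Measure ℝ} [IsFiniteMeasure ν] [NullSingletonClass ν] (ε : ℝ) :
    ∫ x, signShift ε x ∂ν = 2 * (ν.real (Ioo 0 ε) - ν.real (Ioo (-ε) 0)) := by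
  have hae : signShift ε =ᵐ[ν] fun x => (Ioo 0 ε).indicator 2 x - (Ioo (-ε) 0).indicator 2 x := by
    filter_upwards [compl_mem_ae_iff.2 (measure_singleton (μ := ν) (-ε)),
      compl_mem_ae_iff.2 (measure_singleton (μ := ν) 0),
      compl_mem_ae_iff.2 (measure_singleton (μ := ν) ε)] with x h₁ h₂ h₃
    exact signShift_eq_indicator_sub_indicator h₁ h₂ h₃
  rw [integral_congr_ae hae, integral_sub ((integrable_const 2).indicator measurableSet_Ioo)
    ((integrable_const 2).indicator measurableSet_Ioo), integral_indicator measurableSet_Ioo,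
    integral_indicator measurableSet_Ioo]
  simp [mul_sub, mul_comm]

lemma measureReal_Ioo_eq_cdf_sub_cdf {ν : Measure ℝ} [IsProbabilityMeasure ν]
    [NullSingletonClass ν] {a b : ℝ} (hab : a ≤ b) : ν.real (Ioo a b) = cdf ν b - cdf ν a := by
  have h := (cdf ν).measure_Ioc a b
  rw [measure_cdf] at h
  rw [measureReal_congr Ioo_ae_eq_Ioc, measureReal_def, h,
    ENNReal.toReal_ofReal (sub_nonneg.2 (monotone_cdf ν hab))]

lemma stdNormalCDF_neg (x : ℝ) : stdNormalCDF (-x) = 1 - stdNormalCDF x := by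
  have : NullSingletonClass (gaussianReal 0 1) := nullSingletonClass_gaussianReal one_ne_zero
  have hsymm : (gaussianReal 0 1).map (fun x ↦ -x) = gaussianReal 0 1 := by
    simpa using gaussianReal_map_neg (μ := 0) (v := 1)
  rw [stdNormalCDF, stdNormalCDF, cdf_eq_real, cdf_eq_real, ← hsymm,
    map_measureReal_apply (by fun_prop) measurableSet_Iic, hsymm]
  have : (fun x : ℝ ↦ -x) ⁻¹' Iic (-x) = Ici x := by ext; simp
  rw [this, measureReal_congr Ioi_ae_eq_Ici.symm, ← compl_Iic,
    probReal_compl_eq_one_sub measurableSet_Iic]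

lemma cdf_gaussianReal (m : ℝ) {v : NNReal} (hv : v ≠ 0) (x : ℝ) :
    cdf (gaussianReal m v) x = stdNormalCDF ((x - m) / √v) := by
  have hs : 0 < √(v : ℝ) := Real.sqrt_pos.2 (by positivity)
  have hmap : (gaussianReal 0 1).map (fun z ↦ √v * z + m) = gaussianReal m v := by
    rw [show (fun z ↦ √v * z + m) = (· + m) ∘ (√v * ·) from rfl,
      ← Measure.map_map (by fun_prop) (by fun_prop), gaussianReal_map_const_mul,
      gaussianReal_map_add_const]
    congr 1
    · simp
    · ext; simp
  rw [stdNormalCDF, cdf_eq_real, cdf_eq_real, ← hmap,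
    map_measureReal_apply (by fun_prop) measurableSet_Iic]
  congr 1
  ext z
  simp only [mem_preimage, mem_Iic, le_div_iff₀ hs]
  constructor <;> intro h <;> linarith

lemma integral_signShift_gaussianReal (m : ℝ) {v : NNReal} (hv : v ≠ 0) {ε : ℝ} (hε : 0 < ε) :
    ∫ x, signShift ε x ∂gaussianReal m v
      = 2 * (2 * stdNormalCDF (m / √v) - stdNormalCDF ((m + ε) / √v)
          - stdNormalCDF ((m - ε) / √v)) := by
  have := nullSingletonClass_gaussianReal (μ := m) hv
  have hflip : ∀ y, cdf (gaussianReal m v) y = 1 - stdNormalCDF ((m - y) / √v) := fun y => by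
    rw [cdf_gaussianReal m hv, ← stdNormalCDF_neg, ← neg_div, neg_sub]
  rw [integral_signShift, measureReal_Ioo_eq_cdf_sub_cdf hε.le,
    measureReal_Ioo_eq_cdf_sub_cdf (neg_nonpos.2 hε.le), hflip, hflip, hflip, sub_zero,
    sub_neg_eq_add]
  ring

lemma integral_pi_sum_comp_eval_mul {ι : Type*} [Fintype ι] {ν : ι → Measure ℝ}
    [∀ i, IsProbabilityMeasure (ν i)] {f : ι → ℝ → ℝ} (hf : ∀ i, Integrable (f i) (ν i))
    (c : ι → ℝ) :
    ∫ u, ∑ i, f i (u i) * c i ∂Measure.pi ν = ∑ i, (∫ x, f i x ∂ν i) * c i := by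
  rw [integral_finsetSum _ fun i _ => (integrable_comp_eval (hf i)).mul_const (c i)]
  refine Finset.sum_congr rfl fun i _ => ?_
  rw [integral_mul_const, integral_comp_eval (hf i).aestronglyMeasurable]

lemma sqrt_toNNReal_sq_div {σ : ℝ} (hσ : 0 ≤ σ) (n : ℕ) :
    √(Real.toNNReal (σ ^ 2 / n) : ℝ) = σ / √n := by
  rw [Real.coe_toNNReal _ (by positivity), Real.sqrt_div' _ n.cast_nonneg, Real.sqrt_sq hσ]

/-- Generalization gap `g_n = W · E[⟨sign(u) − sign(u − ε·sign(u)), μ⟩]` in the Gaussian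
model, where `u` has independent coordinates `u(j) ~ N(μ(j), σ(j)²/n)`. -/
noncomputable def gaussGap (d : ℕ) (W ε : ℝ) (μ σ : Fin d → ℝ) (n : ℕ) : ℝ :=
  W * ∫ u : Fin d → ℝ,
      (∑ j, (Real.sign (u j) - Real.sign (u j - ε * Real.sign (u j))) * μ j)
    ∂(Measure.pi fun j => gaussianReal (μ j) (Real.toNNReal ((σ j) ^ 2 / n)))

theorem gaussGap_formula_general (d : ℕ) (W ε : ℝ) (μ σ : Fin d → ℝ)
    (hε : 0 < ε) (hμ : ∀ j, 0 ≤ μ j) (hσ : ∀ j, 0 < σ j)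
    (n : ℕ) (hn : 1 ≤ n) :
    gaussGap d W ε μ σ n
      = 2 * W * ∑ j ∈ Finset.univ.filter (fun j => 0 < μ j),
          μ j * (2 * stdNormalCDF (Real.sqrt n * μ j / σ j)
            - stdNormalCDF (Real.sqrt n * (μ j + ε) / σ j)
            - stdNormalCDF (Real.sqrt n * (μ j - ε) / σ j)) := by
  have hn₀ : (0 : ℝ) < n := by exact_mod_cast hn
  have hv : ∀ j, Real.toNNReal (σ j ^ 2 / n) ≠ 0 := fun j =>
    (Real.toNNReal_pos.2 (div_pos (pow_pos (hσ j) 2) hn₀)).ne'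
  have hcoord : gaussGap d W ε μ σ n = W * ∑ j,
      (∫ x, signShift ε x ∂gaussianReal (μ j) (Real.toNNReal (σ j ^ 2 / n))) * μ j :=
    congrArg (W * ·) (integral_pi_sum_comp_eval_mul (fun _ => integrable_signShift ε) μ)
  rw [hcoord, Finset.sum_filter_of_ne fun j _ h => ?nonzero,
    Finset.mul_sum, Finset.mul_sum]
  case nonzero => exact (hμ j).lt_of_ne' (left_ne_zero_of_mul h)
  refine Finset.sum_congr rfl fun j _ => ?_
  rw [integral_signShift_gaussianReal _ (hv j) hε, sqrt_toNNReal_sq_div (hσ j).le]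
  simp only [div_div_eq_mul_div, mul_comm _ √(n : ℝ)]
  ring

theorem gaussGap_formula (d : ℕ) (W ε : ℝ) (μ σ : Fin d → ℝ)
    (hW : 0 < W) (hε : 0 < ε) (hμ : ∀ j, 0 ≤ μ j) (hσ : ∀ j, 0 < σ j)
    (n : ℕ) (hn : 1 ≤ n) :
    gaussGap d W ε μ σ n
      = 2 * W * ∑ j ∈ Finset.univ.filter (fun j => 0 < μ j),
          μ j * (2 * stdNormalCDF (Real.sqrt n * μ j / σ j)
            - stdNormalCDF (Real.sqrt n * (μ j + ε) / σ j)
            - stdNormalCDF (Real.sqrt n * (μ j - ε) / σ j)) :=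
  gaussGap_formula_general d W ε μ σ hε hμ hσ n hn
end

section
/- Consider one-dimensional linear regression with a single training point: let x₁ ~ N(0, 1) and δ ~ N(0, 1) be independent, let y₁ = w* x₁ + δ for a fixed w* ∈ ℝ, and fix ε > 0. Define the standard estimator w^std = y₁/x₁ and the robust estimator w^rob = y₁/x₁ if |x₁| ≥ ε and w^rob = 0 if |x₁| < ε. Then E[(w^std − w*)²] = +∞, while E[(w^rob − w*)²] ≤ (w*)² + 1/ε² < ∞; consequently the generalization gap g₁ = E[(w^rob − w*)²] − E[(w^std − w*)²] equals −∞. -/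
open Real MeasureTheory ProbabilityTheory
open scoped ENNReal

/-- Joint law of `(x₁, δ)` with `x₁ ~ N(0,1)` and `δ ~ N(0,1)` independent. -/
noncomputable def gaussPair : Measure (ℝ × ℝ) :=
  (gaussianReal 0 1).prod (gaussianReal 0 1)

/-- Standard estimator from one data point `(x₁, y₁)` with `y₁ = w* x₁ + δ`:
`w^std = y₁ / x₁`. -/
noncomputable def wStd1 (wstar : ℝ) (p : ℝ × ℝ) : ℝ := (wstar * p.1 + p.2) / p.1

/-- Robust estimator from one data point: `y₁/x₁` if `|x₁| ≥ ε`, else `0`. -/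
noncomputable def wRob1 (wstar ε : ℝ) (p : ℝ × ℝ) : ℝ :=
  if ε ≤ |p.1| then (wstar * p.1 + p.2) / p.1 else 0

/-!
The error of the standard estimator is `δ / x₁`. The density of `x₁` is bounded below near the
origin, where `x₁⁻²` is not integrable, so `E[x₁⁻²] = ∞`; by independence
`E[(δ / x₁)²] = E[x₁⁻²] E[δ²] = ∞`. The robust estimator only divides by `x₁` when `|x₁| ≥ ε`, so
its squared error is at most `max ((w*)², δ² / ε²) ≤ (w*)² + δ² / ε²`, whose expectation is
`(w*)² + 1 / ε²`.
-/

open Set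
open scoped NNReal

lemma lintegral_ofReal_sq_gaussianReal (m : ℝ) (v : ℝ≥0) :
    ∫⁻ x, ENNReal.ofReal (x ^ 2) ∂gaussianReal m v = ENNReal.ofReal (v + m ^ 2) := by
  have hL2 : MemLp id 2 (gaussianReal m v) := memLp_id_gaussianReal 2
  have hvar := variance_eq_sub hL2
  simp only [variance_id_gaussianReal, Pi.pow_apply, id_eq, integral_id_gaussianReal] at hvar
  calc ∫⁻ x, ENNReal.ofReal (x ^ 2) ∂gaussianReal m v
      = ENNReal.ofReal (∫ x, x ^ 2 ∂gaussianReal m v) :=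
        (ofReal_integral_eq_lintegral_ofReal hL2.integrable_sq
          (ae_of_all _ fun x => sq_nonneg x)).symm
    _ = ENNReal.ofReal (v + m ^ 2) := by rw [hvar, sub_add_cancel]

lemma setLIntegral_ofReal_inv_Ioc_eq_top : ∫⁻ x in Ioc (0 : ℝ) 1, ENNReal.ofReal x⁻¹ = ∞ := by
  have h : ¬ IntegrableOn (fun x : ℝ => x⁻¹) (Ioc 0 1) := by
    rw [← intervalIntegrable_iff_integrableOn_Ioc_of_le zero_le_one, intervalIntegrable_inv_iff]
    simp
  contrapose! h
  exact (lintegral_ofReal_ne_top_iff_integrable measurable_inv.aestronglyMeasurable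
    (ae_restrict_of_forall_mem measurableSet_Ioc fun x hx => inv_nonneg.2 hx.1.le)).1 h

lemma lintegral_ofReal_inv_sq_gaussianReal (m : ℝ) {v : ℝ≥0} (hv : v ≠ 0) :
    ∫⁻ x, ENNReal.ofReal (x⁻¹ ^ 2) ∂gaussianReal m v = ∞ := by
  obtain ⟨x₀, -, hx₀⟩ := isCompact_Icc.exists_isMinOn (nonempty_Icc.2 zero_le_one)
    (by unfold gaussianPDFReal; fun_prop : Continuous (gaussianPDFReal m v)).continuousOn
  set c := ENNReal.ofReal (gaussianPDFReal m v x₀)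
  have hc : c ≠ 0 := by simpa [c] using gaussianPDFReal_pos m v x₀ hv
  have hf : Measurable fun x : ℝ => ENNReal.ofReal (x⁻¹ ^ 2) := by fun_prop
  rw [eq_top_iff, gaussianReal_of_var_ne_zero m hv,
    lintegral_withDensity_eq_lintegral_mul _ (measurable_gaussianPDF m v) hf]
  calc ∞ = c * ∫⁻ x in Ioc (0 : ℝ) 1, ENNReal.ofReal x⁻¹ := by
        rw [setLIntegral_ofReal_inv_Ioc_eq_top, ENNReal.mul_top hc]
    _ ≤ ∫⁻ x in Ioc (0 : ℝ) 1, gaussianPDF m v x * ENNReal.ofReal (x⁻¹ ^ 2) := by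
        rw [← lintegral_const_mul _ (by fun_prop)]
        refine setLIntegral_mono (by fun_prop) fun x hx => ?_
        have hx1 : 1 ≤ x⁻¹ := one_le_inv_iff₀.2 hx
        gcongr
        · exact ENNReal.ofReal_le_ofReal (hx₀ (Ioc_subset_Icc_self hx))
        · nlinarith
    _ ≤ _ := setLIntegral_le_lintegral _ _

lemma lintegral_ofReal_div_sq_gaussianReal_prod (m m' : ℝ) {v v' : ℝ≥0} (hv : v ≠ 0)
    (hv' : v' ≠ 0) :
    ∫⁻ p, ENNReal.ofReal ((p.2 / p.1) ^ 2) ∂(gaussianReal m v).prod (gaussianReal m' v') = ∞ := by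
  have hsplit : ∀ p : ℝ × ℝ, ENNReal.ofReal ((p.2 / p.1) ^ 2)
      = ENNReal.ofReal (p.1⁻¹ ^ 2) * ENNReal.ofReal (p.2 ^ 2) := fun p => by
    rw [← ENNReal.ofReal_mul (sq_nonneg _), div_eq_mul_inv, mul_pow, mul_comm]
  simp_rw [hsplit]
  rw [lintegral_prod_mul (f := fun x => ENNReal.ofReal (x⁻¹ ^ 2))
    (g := fun y => ENNReal.ofReal (y ^ 2)) (by fun_prop) (by fun_prop),
    lintegral_ofReal_inv_sq_gaussianReal m hv, lintegral_ofReal_sq_gaussianReal, ENNReal.top_mul]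
  rw [Ne, ENNReal.ofReal_eq_zero, not_le]
  exact add_pos_of_pos_of_nonneg (NNReal.coe_pos.2 (pos_iff_ne_zero.2 hv')) (sq_nonneg m')

instance : IsProbabilityMeasure gaussPair :=
  inferInstanceAs (IsProbabilityMeasure ((gaussianReal 0 1).prod (gaussianReal 0 1)))

lemma mul_add_div_sub {x : ℝ} (w d : ℝ) (hx : x ≠ 0) : (w * x + d) / x - w = d / x := by
  rw [add_div, mul_div_cancel_right₀ _ hx, add_sub_cancel_left]

lemma sq_div_le_sq_wStd1_sub (wstar : ℝ) (p : ℝ × ℝ) :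
    (p.2 / p.1) ^ 2 ≤ (wStd1 wstar p - wstar) ^ 2 := by
  rcases eq_or_ne p.1 0 with h | h
  · rw [h, div_zero, zero_pow two_ne_zero]
    exact sq_nonneg _
  · rw [wStd1, mul_add_div_sub _ _ h]

lemma sq_wRob1_sub_le (wstar : ℝ) {ε : ℝ} (hε : 0 < ε) (p : ℝ × ℝ) :
    (wRob1 wstar ε p - wstar) ^ 2 ≤ wstar ^ 2 + 1 / ε ^ 2 * p.2 ^ 2 := by
  unfold wRob1
  split_ifs with h
  · have hx : p.1 ≠ 0 := abs_pos.1 (hε.trans_le h)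
    have hεx : ε ^ 2 ≤ p.1 ^ 2 := by rw [← sq_abs p.1]; gcongr
    rw [mul_add_div_sub _ _ hx, div_pow, div_eq_mul_inv, mul_comm, one_div]
    have : (p.1 ^ 2)⁻¹ ≤ (ε ^ 2)⁻¹ := by gcongr
    nlinarith [sq_nonneg wstar, sq_nonneg p.2]
  · simp only [zero_sub, neg_sq, le_add_iff_nonneg_right]
    positivity

lemma lintegral_wStd1_sub_sq_eq_top (wstar : ℝ) :
    ∫⁻ p, ENNReal.ofReal ((wStd1 wstar p - wstar) ^ 2) ∂gaussPair = ∞ := by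
  rw [eq_top_iff, ← lintegral_ofReal_div_sq_gaussianReal_prod 0 0 one_ne_zero one_ne_zero]
  exact lintegral_mono fun p => ENNReal.ofReal_le_ofReal (sq_div_le_sq_wStd1_sub wstar p)

lemma lintegral_wRob1_sub_sq_le (wstar : ℝ) {ε : ℝ} (hε : 0 < ε) :
    ∫⁻ p, ENNReal.ofReal ((wRob1 wstar ε p - wstar) ^ 2) ∂gaussPair
      ≤ ENNReal.ofReal (wstar ^ 2 + 1 / ε ^ 2) := by
  have hsnd : ∫⁻ p, ENNReal.ofReal (p.2 ^ 2) ∂gaussPair = 1 := by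
    rw [gaussPair, lintegral_prod _ (by fun_prop)]
    simp [lintegral_ofReal_sq_gaussianReal]
  calc ∫⁻ p, ENNReal.ofReal ((wRob1 wstar ε p - wstar) ^ 2) ∂gaussPair
      ≤ ∫⁻ p, ENNReal.ofReal (wstar ^ 2) + ENNReal.ofReal (1 / ε ^ 2) * ENNReal.ofReal (p.2 ^ 2)
          ∂gaussPair := lintegral_mono fun p => by
        rw [← ENNReal.ofReal_mul (by positivity), ← ENNReal.ofReal_add (by positivity)
          (by positivity)]
        exact ENNReal.ofReal_le_ofReal (sq_wRob1_sub_le wstar hε p)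
    _ = ENNReal.ofReal (wstar ^ 2 + 1 / ε ^ 2) := by
        rw [lintegral_add_left measurable_const, lintegral_const, measure_univ,
          lintegral_const_mul _ (by fun_prop), hsnd, mul_one, mul_one,
          ENNReal.ofReal_add (by positivity) (by positivity)]

/-- With one Gaussian training point: `E[(w^std − w*)²] = ∞`,
`E[(w^rob − w*)²] ≤ (w*)² + 1/ε² < ∞`, hence the generalization gap
`g₁ = E[(w^rob − w*)²] − E[(w^std − w*)²] = −∞` (as extended reals). -/
theorem one_point_gaussian_regression (wstar ε : ℝ) (hε : 0 < ε) :
    (∫⁻ p, ENNReal.ofReal ((wStd1 wstar p - wstar) ^ 2) ∂gaussPair = ⊤) ∧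
    (∫⁻ p, ENNReal.ofReal ((wRob1 wstar ε p - wstar) ^ 2) ∂gaussPair
      ≤ ENNReal.ofReal (wstar ^ 2 + 1 / ε ^ 2)) ∧
    ((∫⁻ p, ENNReal.ofReal ((wRob1 wstar ε p - wstar) ^ 2) ∂gaussPair : ℝ≥0∞).toEReal
      - (∫⁻ p, ENNReal.ofReal ((wStd1 wstar p - wstar) ^ 2) ∂gaussPair : ℝ≥0∞).toEReal
      = ⊥) := by
  refine ⟨lintegral_wStd1_sub_sq_eq_top wstar, lintegral_wRob1_sub_sq_le wstar hε, ?_⟩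
  rw [lintegral_wStd1_sub_sq_eq_top, EReal.coe_ennreal_top]
  exact EReal.sub_top _
end

section
/- Consider one-dimensional linear regression with a single training point: let λ > 0, let x₁ = Z + 1 with Z ~ Poisson(λ), let δ ~ N(0, 1) be independent of x₁, let y₁ = w* x₁ + δ for a fixed w* ∈ ℝ with |w*| ≥ 1, and let ε ≥ 0. Define w^std = y₁/x₁ and w^rob = y₁/x₁ if x₁ ≥ ε and w^rob = 0 if x₁ < ε. Then the generalization gap g₁ = (E[(w^rob − w*)²] − E[(w^std − w*)²]) · E[x₁²] equals E[x₁²] · Σ_{integers k with 1 ≤ k < ε} P[x₁ = k] · ((w*)² − 1/k²); in particular, g₁ is non-negative, finite (bounded above by E[x₁²] · (w*)²), nondecreasing as a function of ε, and equal to 0 whenever 0 ≤ ε ≤ 1. -/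
open Real MeasureTheory ProbabilityTheory
open scoped NNReal

/-- Joint law of `(Z, δ)` with `Z ~ Poisson(λ)` and `δ ~ N(0,1)` independent;
the input is `x₁ = Z + 1`. -/
noncomputable def poisPair (lam : ℝ≥0) : Measure (ℕ × ℝ) :=
  (poissonMeasure lam).prod (gaussianReal 0 1)

/-- Standard estimator from one data point `(x₁, y₁)` with `x₁ = Z + 1` and
`y₁ = w* x₁ + δ`: `w^std = y₁ / x₁`. -/
noncomputable def wStdP (wstar : ℝ) (p : ℕ × ℝ) : ℝ :=
  (wstar * ((p.1 : ℝ) + 1) + p.2) / ((p.1 : ℝ) + 1)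

/-- Robust estimator from one data point: `y₁/x₁` if `x₁ ≥ ε`, else `0`. -/
noncomputable def wRobP (wstar ε : ℝ) (p : ℕ × ℝ) : ℝ :=
  if ε ≤ (p.1 : ℝ) + 1 then (wstar * ((p.1 : ℝ) + 1) + p.2) / ((p.1 : ℝ) + 1) else 0

/-- The generalization gap with one training point,
`g₁(ε) = (E[(w^rob − w*)²] − E[(w^std − w*)²]) · E[x₁²]`. -/
noncomputable def poisGap (lam : ℝ≥0) (wstar ε : ℝ) : ℝ :=
  ((∫ p, (wRobP wstar ε p - wstar) ^ 2 ∂(poisPair lam))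
      - ∫ p, (wStdP wstar p - wstar) ^ 2 ∂(poisPair lam))
    * ∫ z, ((z : ℝ) + 1) ^ 2 ∂(poissonMeasure lam)


/-!
Write `x = z + 1` for the input and `δ` for the noise. The standard estimator errs by `δ / x`, so
given `x` its risk is `1 / x²` because `E[δ²] = 1`. The robust estimator coincides with it when
`ε ≤ x` and is `0`, with risk `(w*)²`, otherwise. The risk difference is therefore the Poisson
expectation of `((w*)² - 1 / x²) · 1[x < ε]`, a finite sum over `1 ≤ k < ε` whose terms are
non-negative because `1 / k² ≤ 1 ≤ (w*)²` and whose weights add up to at most `1`.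
-/
lemma integral_sq_gaussianReal_zero (v : ℝ≥0) : ∫ x, x ^ 2 ∂gaussianReal 0 v = v := by
  rw [← variance_of_integral_eq_zero aemeasurable_id' integral_id_gaussianReal,
    variance_fun_id_gaussianReal]

lemma integrable_sq_gaussianReal (μ : ℝ) (v : ℝ≥0) :
    Integrable (fun x ↦ x ^ 2) (gaussianReal μ v) :=
  (memLp_id_gaussianReal 2).integrable_sq

lemma MeasureTheory.Integrable.of_forall_abs_le {α : Type*} [MeasurableSpace α]
    [DiscreteMeasurableSpace α] {μ : Measure α} [IsFiniteMeasure μ] {f : α → ℝ} (C : ℝ)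
    (hf : ∀ x, |f x| ≤ C) : Integrable f μ :=
  .of_bound Measurable.of_discrete.aestronglyMeasurable C (ae_of_all _ hf)

lemma integral_prod_gaussianReal_mul_sq_add {α : Type*} [MeasurableSpace α] {μ : Measure α}
    [SFinite μ] {a b : α → ℝ} (ha : Integrable a μ) (hb : Integrable b μ) :
    ∫ p, (a p.1 * p.2 ^ 2 + b p.1) ∂μ.prod (gaussianReal 0 1) = ∫ z, (a z + b z) ∂μ := by
  rw [integral_add (ha.mul_prod (integrable_sq_gaussianReal 0 1)) (hb.comp_fst _),
    integral_prod_mul a (· ^ 2), integral_fun_fst, integral_sq_gaussianReal_zero,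
    integral_add ha hb]
  simp

lemma integral_poissonMeasure_ite_lt (lam : ℝ≥0) (f : ℕ → ℝ) (n : ℕ) :
    ∫ z, (if z < n then f z else 0) ∂poissonMeasure lam
      = ∑ z ∈ Finset.range n, poissonPMFReal lam z * f z := by
  rw [integral_poissonMeasure, tsum_eq_sum (s := Finset.range n)]
  · refine Finset.sum_congr rfl fun z hz ↦ ?_
    rw [if_pos (Finset.mem_range.1 hz), smul_eq_mul, poissonPMFReal]
  · intro z hz
    rw [if_neg (by simpa using hz), smul_zero]

lemma abs_one_div_sq_natCast_add_one_le_one (z : ℕ) : |1 / ((z : ℝ) + 1) ^ 2| ≤ 1 := by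
  rw [abs_of_nonneg (by positivity)]
  exact div_le_one_of_le₀ (one_le_pow₀ (by simp)) (by positivity)

lemma integrable_one_div_sq_natCast_add_one (μ : Measure ℕ) [IsFiniteMeasure μ] :
    Integrable (fun z : ℕ ↦ 1 / ((z : ℝ) + 1) ^ 2) μ :=
  .of_forall_abs_le 1 abs_one_div_sq_natCast_add_one_le_one

lemma integral_sq_wStdP_sub (lam : ℝ≥0) (w : ℝ) :
    ∫ p, (wStdP w p - w) ^ 2 ∂poisPair lam = ∫ z, 1 / ((z : ℝ) + 1) ^ 2 ∂poissonMeasure lam := by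
  calc ∫ p, (wStdP w p - w) ^ 2 ∂poisPair lam
      = ∫ p, (1 / ((p.1 : ℝ) + 1) ^ 2 * p.2 ^ 2 + 0) ∂poisPair lam := by
        congr with p
        rw [wStdP]
        field_simp
        ring
    _ = _ := by
        rw [poisPair, integral_prod_gaussianReal_mul_sq_add (b := fun _ ↦ 0)
          (integrable_one_div_sq_natCast_add_one _) (integrable_zero _ _ _)]
        simp

lemma integral_sq_wRobP_sub (lam : ℝ≥0) (w ε : ℝ) :
    ∫ p, (wRobP w ε p - w) ^ 2 ∂poisPair lam
      = ∫ z, (if ε ≤ (z : ℝ) + 1 then 1 / ((z : ℝ) + 1) ^ 2 else w ^ 2) ∂poissonMeasure lam := by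
  have ha : Integrable (fun z : ℕ ↦ if ε ≤ (z : ℝ) + 1 then 1 / ((z : ℝ) + 1) ^ 2 else 0)
      (poissonMeasure lam) :=
    .of_forall_abs_le 1 fun z ↦ by
      split_ifs
      · exact abs_one_div_sq_natCast_add_one_le_one z
      · simp
  have hb : Integrable (fun z : ℕ ↦ if ε ≤ (z : ℝ) + 1 then 0 else w ^ 2) (poissonMeasure lam) :=
    .of_forall_abs_le (w ^ 2) fun z ↦ by split_ifs <;> simp [sq_nonneg]
  calc ∫ p, (wRobP w ε p - w) ^ 2 ∂poisPair lam
      = ∫ p, ((if ε ≤ (p.1 : ℝ) + 1 then 1 / ((p.1 : ℝ) + 1) ^ 2 else 0) * p.2 ^ 2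
          + if ε ≤ (p.1 : ℝ) + 1 then 0 else w ^ 2) ∂poisPair lam := by
        congr with p
        rw [wRobP]
        split_ifs
        · field_simp
          ring
        · ring
    _ = _ := by
        rw [poisPair, integral_prod_gaussianReal_mul_sq_add ha hb]
        congr with z
        split_ifs <;> simp

lemma integral_sq_wRobP_sub_sub_integral_sq_wStdP_sub (lam : ℝ≥0) (w ε : ℝ) :
    ∫ p, (wRobP w ε p - w) ^ 2 ∂poisPair lam - ∫ p, (wStdP w p - w) ^ 2 ∂poisPair lam
      = ∫ z, (if z < ⌈ε⌉₊ - 1 then w ^ 2 - 1 / ((z : ℝ) + 1) ^ 2 else 0)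
          ∂poissonMeasure lam := by
  have hrob : Integrable
      (fun z : ℕ ↦ if ε ≤ (z : ℝ) + 1 then 1 / ((z : ℝ) + 1) ^ 2 else w ^ 2)
      (poissonMeasure lam) :=
    .of_forall_abs_le (1 + w ^ 2) fun z ↦ by
      have := abs_one_div_sq_natCast_add_one_le_one z
      split_ifs
      · linarith [sq_nonneg w]
      · rw [abs_sq]
        linarith
  rw [integral_sq_wRobP_sub, integral_sq_wStdP_sub,
    ← integral_sub hrob (integrable_one_div_sq_natCast_add_one _)]
  congr with z
  have hlt : z < ⌈ε⌉₊ - 1 ↔ (z : ℝ) + 1 < ε := by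
    rw [show z < ⌈ε⌉₊ - 1 ↔ z + 1 < ⌈ε⌉₊ by omega, Nat.lt_ceil]
    push_cast
    rfl
  by_cases hz : z < ⌈ε⌉₊ - 1
  · rw [if_neg (not_le.2 (hlt.1 hz)), if_pos hz]
  · rw [if_pos (not_lt.1 (hlt.not.1 hz)), if_neg hz, sub_self]

noncomputable def poisGapSum (lam : ℝ≥0) (w : ℝ) (m : ℕ) : ℝ :=
  ∑ k ∈ Finset.Ico 1 m, poissonPMFReal lam (k - 1) * (w ^ 2 - 1 / (k : ℝ) ^ 2)

lemma poisGap_eq (lam : ℝ≥0) (w ε : ℝ) :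
    poisGap lam w ε = (∫ z, ((z : ℝ) + 1) ^ 2 ∂poissonMeasure lam) * poisGapSum lam w ⌈ε⌉₊ := by
  rw [poisGap, integral_sq_wRobP_sub_sub_integral_sq_wStdP_sub, integral_poissonMeasure_ite_lt,
    mul_comm, poisGapSum, Finset.sum_Ico_eq_sum_range]
  congr 1
  refine Finset.sum_congr rfl fun z _ ↦ ?_
  rw [Nat.add_sub_cancel_left]
  push_cast
  ring

lemma one_div_natCast_sq_le_sq {k : ℕ} (hk : 1 ≤ k) {w : ℝ} (hw : 1 ≤ |w|) :
    1 / (k : ℝ) ^ 2 ≤ w ^ 2 :=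
  calc 1 / (k : ℝ) ^ 2 ≤ 1 :=
        div_le_one_of_le₀ (one_le_pow₀ (by exact_mod_cast hk)) (by positivity)
    _ ≤ |w| ^ 2 := one_le_pow₀ hw
    _ = w ^ 2 := sq_abs w

section poisGapSum

variable {lam : ℝ≥0} {w : ℝ}

lemma poisGapSum_mono (hw : 1 ≤ |w|) : Monotone (poisGapSum lam w) := fun _ _ hm ↦
  Finset.sum_le_sum_of_subset_of_nonneg (Finset.Ico_subset_Ico le_rfl hm) fun _ hk _ ↦
    mul_nonneg poissonPMFReal_nonneg
      (sub_nonneg.2 (one_div_natCast_sq_le_sq (Finset.mem_Ico.1 hk).1 hw))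

lemma poisGapSum_of_le_one {m : ℕ} (hm : m ≤ 1) : poisGapSum lam w m = 0 := by
  rw [poisGapSum, Finset.Ico_eq_empty_of_le hm, Finset.sum_empty]

lemma poisGapSum_nonneg (hw : 1 ≤ |w|) (m : ℕ) : 0 ≤ poisGapSum lam w m :=
  (poisGapSum_of_le_one zero_le_one).symm.le.trans (poisGapSum_mono hw (Nat.zero_le m))

lemma poisGapSum_le_sq (m : ℕ) : poisGapSum lam w m ≤ w ^ 2 :=
  calc poisGapSum lam w m
      ≤ ∑ k ∈ Finset.Ico 1 m, poissonPMFReal lam (k - 1) * w ^ 2 :=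
        Finset.sum_le_sum fun k _ ↦ mul_le_mul_of_nonneg_left
          (sub_le_self _ (by positivity)) poissonPMFReal_nonneg
    _ = (∑ z ∈ Finset.range (m - 1), poissonPMFReal lam z) * w ^ 2 := by
        rw [Finset.sum_Ico_eq_sum_range, Finset.sum_mul]
        simp only [Nat.add_sub_cancel_left]
    _ ≤ 1 * w ^ 2 := by
        gcongr
        exact sum_le_hasSum _ (fun _ _ ↦ poissonPMFReal_nonneg) (hasSum_one_poissonMeasure lam)
    _ = w ^ 2 := one_mul _

end poisGapSum

theorem one_point_poisson_regression_general (lam : ℝ≥0)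
    (wstar : ℝ) (hw : 1 ≤ |wstar|) (ε : ℝ) :
    (poisGap lam wstar ε
      = (∫ z, ((z : ℝ) + 1) ^ 2 ∂(poissonMeasure lam))
        * ∑ k ∈ Finset.Ico 1 ⌈ε⌉₊,
            poissonPMFReal lam (k - 1) * (wstar ^ 2 - 1 / (k : ℝ) ^ 2)) ∧
    0 ≤ poisGap lam wstar ε ∧
    poisGap lam wstar ε
      ≤ (∫ z, ((z : ℝ) + 1) ^ 2 ∂(poissonMeasure lam)) * wstar ^ 2 ∧
    (∀ ε₁ ε₂ : ℝ, 0 ≤ ε₁ → ε₁ ≤ ε₂ → poisGap lam wstar ε₁ ≤ poisGap lam wstar ε₂) ∧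
    (∀ e : ℝ, 0 ≤ e → e ≤ 1 → poisGap lam wstar e = 0) := by
  have hmoment : 0 ≤ ∫ z, ((z : ℝ) + 1) ^ 2 ∂poissonMeasure lam :=
    integral_nonneg fun _ ↦ sq_nonneg _
  refine ⟨poisGap_eq lam wstar ε, ?_, ?_, ?_, ?_⟩
  · rw [poisGap_eq]
    exact mul_nonneg hmoment (poisGapSum_nonneg hw _)
  · rw [poisGap_eq]
    exact mul_le_mul_of_nonneg_left (poisGapSum_le_sq _) hmoment
  · intro ε₁ ε₂ _ hε
    rw [poisGap_eq, poisGap_eq]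
    exact mul_le_mul_of_nonneg_left (poisGapSum_mono hw (Nat.ceil_mono hε)) hmoment
  · intro e _ he
    rw [poisGap_eq, poisGapSum_of_le_one (Nat.ceil_le.2 (by exact_mod_cast he)), mul_zero]

/-- With one shifted-Poisson training point: the generalization gap equals
`E[x₁²] · Σ_{1 ≤ k < ε} P[x₁ = k]((w*)² − 1/k²)`; it is non-negative, bounded above by
`E[x₁²]·(w*)²` (hence finite), nondecreasing in `ε`, and zero for `0 ≤ ε ≤ 1`. -/
theorem one_point_poisson_regression (lam : ℝ≥0) (hlam : 0 < lam)
    (wstar : ℝ) (hw : 1 ≤ |wstar|) (ε : ℝ) (hε : 0 ≤ ε) :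
    (poisGap lam wstar ε
      = (∫ z, ((z : ℝ) + 1) ^ 2 ∂(poissonMeasure lam))
        * ∑ k ∈ Finset.Ico 1 ⌈ε⌉₊,
            poissonPMFReal lam (k - 1) * (wstar ^ 2 - 1 / (k : ℝ) ^ 2)) ∧
    0 ≤ poisGap lam wstar ε ∧
    poisGap lam wstar ε
      ≤ (∫ z, ((z : ℝ) + 1) ^ 2 ∂(poissonMeasure lam)) * wstar ^ 2 ∧
    (∀ ε₁ ε₂ : ℝ, 0 ≤ ε₁ → ε₁ ≤ ε₂ → poisGap lam wstar ε₁ ≤ poisGap lam wstar ε₂) ∧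
    (∀ e : ℝ, 0 ≤ e → e ≤ 1 → poisGap lam wstar e = 0) :=
  one_point_poisson_regression_general lam wstar hw ε
end
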